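/- arXiv:1308.1556 — 3 statements merged into one kernel-verified Lean document; each statement's English description precedes it below -/
import Mathlib

section
/- For every pair of constants p and ε with 0 < p < 1, ε > 0 and p + ε < 1 there exists a constant μ > 0 (one may take μ = ε²/(64 p ln 2)) such that for all sufficiently large n, in the Erdős–Rényi random graph G(n,p) the probability that there exists a vertex v with deg_G(v) ≤ (p+ε)n is at least 1 − 2^{−μ n²}. -/
/-!
STATEMENT 2: For every pair of constants p and ε with 0 < p < 1, ε > 0 and p + ε < 1
there exists a constant μ > 0 such that for all sufficiently large n, in the Erdős–Rényi
random graph G(n,p) the probability that there exists a vertex v with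
deg_G(v) ≤ (p+ε)n is at least 1 − 2^{−μ n²}.
-/

open Classical

/-- Index type for the edge indicator variables: unordered pairs of distinct vertices. -/
abbrev EdgeIdx (n : ℕ) := {e : Sym2 (Fin n) // ¬ e.IsDiag}

/-- Probability of an event `A` under the Erdős–Rényi measure `G(n,p)`. -/
noncomputable def erProb (n : ℕ) (p : ℝ) (A : (EdgeIdx n → Bool) → Prop) : ℝ :=
  ∑ ω : EdgeIdx n → Bool,
    if A ω then ∏ e : EdgeIdx n, (if ω e then p else 1 - p) else 0

/-- The simple graph determined by an outcome of the edge indicators. -/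
def erGraph {n : ℕ} (ω : EdgeIdx n → Bool) : SimpleGraph (Fin n) where
  Adj u v := ∃ h : u ≠ v, ω ⟨s(u, v), by simp [h]⟩ = true
  symm := by
    constructor
    rintro u v ⟨h, hw⟩
    refine ⟨h.symm, ?_⟩
    rwa [show (⟨s(v, u), by simp [h.symm]⟩ : EdgeIdx n) =
        ⟨s(u, v), by simp [h]⟩ from Subtype.ext (Sym2.eq_swap)]
  loopless := by constructor; rintro v ⟨h, -⟩; exact h rfl

/-- The degree of a vertex `v` in the graph determined by the outcome `ω`. -/
noncomputable def degER {n : ℕ} (ω : EdgeIdx n → Bool) (v : Fin n) : ℕ :=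
  ((erGraph ω).neighborSet v).ncard

lemma sum_prod_bool {n : ℕ} (f : EdgeIdx n → Bool → ℝ) :
    ∑ ω : EdgeIdx n → Bool, ∏ e, f e (ω e) = ∏ e : EdgeIdx n, (f e true + f e false) := by
  have h := Fintype.prod_sum (fun (e : EdgeIdx n) (b : Bool) => f e b)
  simp only [Fintype.sum_bool] at h
  exact h.symm

lemma mem_edgeSet_iff' {n : ℕ} (ω : EdgeIdx n → Bool) (e : Sym2 (Fin n)) (hd : ¬ e.IsDiag) :
    e ∈ (erGraph ω).edgeSet ↔ ω ⟨e, hd⟩ = true := by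
  induction e using Sym2.ind with
  | _ u v =>
    have huv : u ≠ v := by simpa using hd
    rw [SimpleGraph.mem_edgeSet]
    constructor
    · rintro ⟨h, hw⟩; exact hw
    · intro hw; exact ⟨huv, hw⟩

noncomputable def edgeEquiv {n : ℕ} (ω : EdgeIdx n → Bool) :
    (erGraph ω).edgeSet ≃ {e : EdgeIdx n // ω e = true} where
  toFun x := ⟨⟨x.1, (erGraph ω).not_isDiag_of_mem_edgeSet x.2⟩,
    (mem_edgeSet_iff' ω x.1 _).1 x.2⟩
  invFun x := ⟨x.1.1, (mem_edgeSet_iff' ω x.1.1 x.1.2).2 x.2⟩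
  left_inv x := rfl
  right_inv x := rfl

lemma degER_eq_degree {n : ℕ} (ω : EdgeIdx n → Bool) [DecidableRel (erGraph ω).Adj] (v : Fin n) :
    degER ω v = (erGraph ω).degree v := by
  rw [degER, ← SimpleGraph.card_neighborSet_eq_degree, ← Nat.card_coe_set_eq]
  exact Nat.card_eq_fintype_card

lemma sum_degER {n : ℕ} (ω : EdgeIdx n → Bool) :
    ∑ v, degER ω v = 2 * (Finset.univ.filter fun e : EdgeIdx n => ω e = true).card := by
  classical
  have h := (erGraph ω).sum_degrees_eq_twice_card_edges
  calc ∑ v, degER ω v = ∑ v, (erGraph ω).degree v :=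
        Finset.sum_congr rfl fun v _ => degER_eq_degree ω v
    _ = 2 * (erGraph ω).edgeFinset.card := h
    _ = 2 * (Finset.univ.filter fun e : EdgeIdx n => ω e = true).card := by
        rw [SimpleGraph.edgeFinset_card, Fintype.card_congr (edgeEquiv ω),
          Fintype.card_subtype]

lemma erProb_add_compl (n : ℕ) (p : ℝ) (A : (EdgeIdx n → Bool) → Prop) :
    erProb n p A + erProb n p (fun ω => ¬ A ω) = 1 := by
  rw [erProb, erProb, ← Finset.sum_add_distrib]
  trans (∑ ω : EdgeIdx n → Bool, ∏ e : EdgeIdx n, (if ω e then p else 1-p))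
  · apply Finset.sum_congr rfl
    intro ω _
    by_cases h : A ω <;> simp [h]
  · trans (∏ e : EdgeIdx n, ((if true then p else 1-p) + (if false then p else 1-p)))
    · exact sum_prod_bool (fun _ b => if b then p else 1 - p)
    · simp


lemma erProb_le {n : ℕ} {p : ℝ} (A : (EdgeIdx n → Bool) → Prop)
    (g : (EdgeIdx n → Bool) → ℝ)
    (h : ∀ ω, A ω → (∏ e : EdgeIdx n, (if ω e then p else 1 - p)) ≤ g ω)
    (hg : ∀ ω, 0 ≤ g ω) :
    erProb n p A ≤ ∑ ω : EdgeIdx n → Bool, g ω := by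
  rw [erProb]
  apply Finset.sum_le_sum
  intro ω _
  split
  · exact h ω ‹_›
  · exact hg ω

theorem min_degree_upper_bound_whp (p ε : ℝ) (hp0 : 0 < p) (hp1 : p < 1) (hε : 0 < ε)
    (hpε : p + ε < 1) :
    ∃ μ : ℝ, 0 < μ ∧ ∃ N : ℕ, ∀ n : ℕ, N ≤ n →
      1 - 2 ^ (-μ * (n : ℝ) ^ 2) ≤
        erProb n p (fun ω => ∃ v : Fin n, (degER ω v : ℝ) ≤ (p + ε) * n) := by
  have hq0 : (0:ℝ) < 1 - p := by linarith
  set lam : ℝ := 1 + ε / (2 * p) with hlamdef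
  have hlam1 : 1 < lam := by
    have : 0 < ε / (2 * p) := div_pos hε (by linarith)
    simp only [hlamdef]; linarith
  have hlam0 : 0 < lam := by linarith
  have hplam : p * lam + (1 - p) = 1 + ε / 2 := by
    rw [hlamdef, mul_add, mul_one, mul_div_assoc', mul_comm 2 p, mul_div_mul_left ε 2 hp0.ne']; ring
  have hloglam : 0 < Real.log lam := Real.log_pos hlam1
  set α : ℝ := (p + ε) * Real.log lam - Real.log (1 + ε / 2) with hαdef
  have hα0 : 0 < α := by
    have h1 : Real.log (1 + ε/2) ≤ ε/2 := by
      have := Real.log_le_sub_one_of_pos (show (0:ℝ) < 1 + ε/2 by linarith); linarith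
    have h2 : 1 - lam⁻¹ ≤ Real.log lam := Real.one_sub_inv_le_log_of_pos hlam0
    have key : ε / 2 < (p + ε) * (1 - lam⁻¹) := by
      rw [show (1 : ℝ) - lam⁻¹ = (lam - 1) / lam by field_simp, ← mul_div_assoc,
        lt_div_iff₀ hlam0]
      have hexp : lam - 1 = ε / (2 * p) := by simp [hlamdef]
      rw [hexp, hlamdef]
      have h2p : (0:ℝ) < 2 * p := by linarith
      rw [show (p + ε) * (ε / (2 * p)) = ε / 2 * (1 + ε / (2 * p)) + ε ^ 2 / (4 * p) by
        field_simp; ring]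
      have : (0:ℝ) < ε ^ 2 / (4 * p) := div_pos (pow_pos hε 2) (by linarith)
      linarith
    have h3 : (p + ε) * (1 - lam⁻¹) ≤ (p + ε) * Real.log lam :=
      mul_le_mul_of_nonneg_left h2 (by linarith)
    simp only [hαdef]; linarith
  have hlog2 : 0 < Real.log 2 := Real.log_pos (by norm_num)
  refine ⟨α / (2 * Real.log 2), by positivity, 1, ?_⟩
  intro n hn
  have hcompl := erProb_add_compl n p (fun ω => ∃ v : Fin n, (degER ω v : ℝ) ≤ (p + ε) * n)
  set Bad : (EdgeIdx n → Bool) → Prop :=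
    fun ω => ¬ ∃ v : Fin n, (degER ω v : ℝ) ≤ (p + ε) * n with hBaddef
  suffices hB : erProb n p Bad ≤ 2 ^ (-(α / (2 * Real.log 2)) * (n : ℝ) ^ 2) by
    have : -(α / (2 * Real.log 2)) * (n : ℝ) ^ 2 = -(α / (2 * Real.log 2)) * (n : ℝ) ^ 2 := rfl
    linarith [hcompl, hB]
  set T : ℝ := (p + ε) * (n : ℝ) ^ 2 / 2 with hTdef
  set m := Fintype.card (EdgeIdx n) with hmdef
  have hm2 : 2 * (m : ℝ) ≤ (n : ℝ) ^ 2 := by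
    have h1 : m = n.choose 2 := by
      rw [hmdef]; rw [Sym2.card_subtype_not_diag, Fintype.card_fin]
    have h2 : 2 * m ≤ n ^ 2 := by
      rw [h1, Nat.choose_two_right]
      calc 2 * (n * (n - 1) / 2) ≤ n * (n - 1) := by
            rw [mul_comm]; exact Nat.div_mul_le_self _ 2
        _ ≤ n * n := Nat.mul_le_mul_left n (Nat.sub_le n 1)
        _ = n ^ 2 := (sq n).symm
    calc 2 * (m:ℝ) = ((2 * m : ℕ) : ℝ) := by push_cast; ring
      _ ≤ ((n ^ 2 : ℕ) : ℝ) := by exact_mod_cast Nat.cast_le.mpr h2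
      _ = (n:ℝ)^2 := by push_cast; ring
  -- pointwise bound for bad outcomes
  have key1 : ∀ ω : EdgeIdx n → Bool, Bad ω →
      (∏ e : EdgeIdx n, (if ω e then p else 1 - p)) ≤
        lam ^ (-T) * ∏ e : EdgeIdx n, (if ω e then p * lam else 1 - p) := by
    intro ω hbad
    rw [hBaddef] at hbad
    push_neg at hbad
    set k := (Finset.univ.filter fun e : EdgeIdx n => ω e = true).card with hkdef
    have hk : (p + ε) * (n:ℝ) ^ 2 < 2 * (k:ℝ) := by
      have hhs := sum_degER ω
      have hsum : (p + ε) * n * n < ∑ v : Fin n, (degER ω v : ℝ) := by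
        have hne : (Finset.univ : Finset (Fin n)).Nonempty := by
          rw [Finset.univ_nonempty_iff]
          exact Fin.pos_iff_nonempty.mp (by omega)
        calc (p + ε) * n * n = ∑ _v : Fin n, (p + ε) * n := by
              rw [Finset.sum_const, Finset.card_univ, Fintype.card_fin, nsmul_eq_mul]; ring
          _ < ∑ v : Fin n, (degER ω v : ℝ) :=
              Finset.sum_lt_sum_of_nonempty hne fun v _ => hbad v
      have hcast : (∑ v : Fin n, (degER ω v : ℝ)) = 2 * (k:ℝ) := by
        rw [← Nat.cast_sum, hhs]; push_cast; ring
      calc (p + ε) * (n:ℝ)^2 = (p + ε) * n * n := by ring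
        _ < 2 * (k:ℝ) := hcast ▸ hsum
    have hTk : T ≤ (k : ℝ) := by rw [hTdef]; linarith
    have hlampow : lam ^ T ≤ lam ^ (k : ℝ) :=
      (Real.rpow_le_rpow_left_iff hlam1).mpr hTk
    have hprod : (∏ e : EdgeIdx n, (if ω e then p else 1 - p)) * lam ^ k =
        ∏ e : EdgeIdx n, (if ω e then p * lam else 1 - p) := by
      have hl : (lam : ℝ) ^ k = ∏ e : EdgeIdx n, (if ω e then lam else 1) := by
        rw [Finset.prod_ite, Finset.prod_const, Finset.prod_const_one, mul_one, hkdef]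
      rw [hl, ← Finset.prod_mul_distrib]
      apply Finset.prod_congr rfl
      intro e _
      by_cases h : ω e <;> simp [h]
    have hw0 : 0 ≤ ∏ e : EdgeIdx n, (if ω e then p else 1 - p) := by
      apply Finset.prod_nonneg; intro e _; split <;> linarith
    have h1le : 1 ≤ lam ^ (-T) * lam ^ k := by
      have : lam ^ (-T) * lam ^ T = 1 := by
        rw [← Real.rpow_add hlam0]; simp
      calc (1:ℝ) = lam ^ (-T) * lam ^ T := this.symm
        _ ≤ lam ^ (-T) * lam ^ (k:ℝ) := by
            apply mul_le_mul_of_nonneg_left hlampow (le_of_lt (Real.rpow_pos_of_pos hlam0 _))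
        _ = lam ^ (-T) * lam ^ k := by rw [Real.rpow_natCast]
    calc (∏ e : EdgeIdx n, (if ω e then p else 1 - p))
        = (∏ e : EdgeIdx n, (if ω e then p else 1 - p)) * 1 := (mul_one _).symm
      _ ≤ (∏ e : EdgeIdx n, (if ω e then p else 1 - p)) * (lam ^ (-T) * lam ^ k) :=
          mul_le_mul_of_nonneg_left h1le hw0
      _ = lam ^ (-T) * ((∏ e : EdgeIdx n, (if ω e then p else 1 - p)) * lam ^ k) := by ring
      _ = lam ^ (-T) * ∏ e : EdgeIdx n, (if ω e then p * lam else 1 - p) := by rw [hprod]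
  -- summing the pointwise bound
  have hbound : erProb n p Bad ≤ lam ^ (-T) * (1 + ε / 2) ^ m := by
    have hg : ∀ ω : EdgeIdx n → Bool,
        (0:ℝ) ≤ lam ^ (-T) * ∏ e : EdgeIdx n, (if ω e then p * lam else 1 - p) := by
      intro ω
      have : (0:ℝ) ≤ ∏ e : EdgeIdx n, (if ω e then p * lam else 1 - p) := by
        apply Finset.prod_nonneg; intro e _; split
        · positivity
        · linarith
      positivity
    refine (erProb_le Bad _ key1 hg).trans (le_of_eq ?_)
    calc (∑ ω : EdgeIdx n → Bool,
            lam ^ (-T) * ∏ e : EdgeIdx n, (if ω e then p * lam else 1 - p))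
        = lam ^ (-T) * ∑ ω : EdgeIdx n → Bool,
            ∏ e : EdgeIdx n, (if ω e then p * lam else 1 - p) := by
          rw [Finset.mul_sum]
      _ = lam ^ (-T) * ∏ e : EdgeIdx n, ((if true then p * lam else 1 - p) +
            (if false then p * lam else 1 - p)) := by
          rw [sum_prod_bool (fun _ b => if b then p * lam else 1 - p)]
      _ = lam ^ (-T) * ∏ _e : EdgeIdx n, (p * lam + (1 - p)) := by norm_num
      _ = lam ^ (-T) * (1 + ε / 2) ^ m := by
          rw [hplam, Finset.prod_const, Finset.card_univ]
  refine hbound.trans ?_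
  -- final numeric bound
  have hq1 : (0:ℝ) < 1 + ε / 2 := by linarith
  have hlogq : 0 ≤ Real.log (1 + ε / 2) := Real.log_nonneg (by linarith)
  rw [Real.rpow_def_of_pos hlam0, Real.rpow_def_of_pos (by norm_num : (0:ℝ) < 2),
    ← Real.exp_log (show (0:ℝ) < (1 + ε / 2) ^ m by positivity), ← Real.exp_add,
    Real.exp_le_exp, Real.log_pow]
  have hmain : Real.log 2 * (-(α / (2 * Real.log 2)) * (n:ℝ) ^ 2) = -α * (n:ℝ) ^ 2 / 2 := by
    field_simp
  rw [hmain, hαdef, hTdef]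
  have hmq : (m:ℝ) * Real.log (1 + ε / 2) ≤ ((n:ℝ)^2 / 2) * Real.log (1 + ε / 2) := by
    apply mul_le_mul_of_nonneg_right _ hlogq
    linarith
  nlinarith [hmq]
end

section
/- Let 0 < r < 1 and B > 0 be constants and let m₀ be a positive integer. Suppose T : ℕ → ℝ is nonnegative and satisfies, for every integer m > m₀, the recurrence T(m) ≤ T(⌈r·m⌉) + T(m−1) + B·m². Then there exists a constant c > 0 such that T(m) ≤ 2^{c (log₂ m)²} for every integer m ≥ 2. -/
set_option maxHeartbeats 1000000

open Real

private lemma aux_poly {t mr : ℝ} (ht : 6 ≤ t) (hm : 5 ≤ mr) :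
    2 * mr + 2 * t ≤ t * mr ^ 3 := by
  have h0 : (0:ℝ) < mr := by linarith
  have hm2 : 25 ≤ mr ^ 2 := by nlinarith [sq_nonneg (mr - 5)]
  have hm3 : 125 ≤ mr ^ 3 := by
    nlinarith [mul_nonneg (show (0:ℝ) ≤ mr - 5 by linarith) (sq_nonneg mr)]
  have h1 : (0:ℝ) ≤ mr ^ 3 - 2 := by nlinarith
  have h2 : 6 * (mr ^ 3 - 2) ≤ t * (mr ^ 3 - 2) := mul_le_mul_of_nonneg_right ht h1
  have h3 : 25 * mr ≤ mr ^ 3 := by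
    nlinarith [mul_nonneg h0.le (show (0:ℝ) ≤ mr ^ 2 - 25 by linarith)]
  nlinarith [h2, h3]

theorem quasipolynomial_bound_of_recurrence (r B : ℝ) (hr0 : 0 < r) (hr1 : r < 1)
    (hB : 0 < B) (m₀ : ℕ) (hm₀ : 0 < m₀) (T : ℕ → ℝ) (hT : ∀ m : ℕ, 0 ≤ T m)
    (hrec : ∀ m : ℕ, m₀ < m →
      T m ≤ T ⌈r * (m : ℝ)⌉₊ + T (m - 1) + B * (m : ℝ) ^ 2) :
    ∃ c : ℝ, 0 < c ∧ ∀ m : ℕ, 2 ≤ m →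
      T m ≤ 2 ^ (c * (Real.logb 2 m) ^ 2) := by
  have h12 : (1:ℝ) < 2 := one_lt_two
  have h02 : (0:ℝ) < 2 := two_pos
  have h2ne : (2:ℝ) ≠ 1 := by norm_num
  set r' : ℝ := (1 + r) / 2 with hr'def
  have hr'0 : 0 < r' := by rw [hr'def]; linarith
  have hr'1 : r' < 1 := by rw [hr'def]; linarith
  set δ : ℝ := Real.logb 2 (1 / r') with hδdef
  have hδpos : 0 < δ := Real.logb_pos h12 (by rw [lt_div_iff₀ hr'0]; linarith)
  set X : ℝ := 2 / (1 - r) + 2 / r + 2 * (1 + B) + (2:ℝ) ^ δ + 4 with hXdef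
  have p1 : 0 < 2 / (1 - r) := by
    apply div_pos h02; linarith
  have p2 : 0 < 2 / r := by positivity
  have p3 : 0 < 2 * (1 + B) := by positivity
  have p4 : 0 < (2:ℝ) ^ δ := Real.rpow_pos_of_pos h02 δ
  set M : ℕ := max m₀ ⌈X⌉₊ with hMdef
  set S : ℝ := ∑ k ∈ Finset.range (M + 1), T k with hSdef
  have hS0 : 0 ≤ S := Finset.sum_nonneg fun k _ => hT k
  set c : ℝ := max 6 (max (3 / δ) (Real.logb 2 (S + 1))) with hcdef
  have hc6 : (6:ℝ) ≤ c := le_max_left _ _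
  have hc0 : 0 < c := by linarith
  have hcδ : 3 ≤ c * δ := by
    have h3δ : 3 / δ ≤ c := le_trans (le_max_left _ _) (le_max_right _ _)
    have h := mul_le_mul_of_nonneg_right h3δ hδpos.le
    rwa [div_mul_cancel₀ _ hδpos.ne'] at h
  have hcS : S + 1 ≤ (2:ℝ) ^ c := by
    have h1 : Real.logb 2 (S + 1) ≤ c := le_trans (le_max_right _ _) (le_max_right _ _)
    calc S + 1 = (2:ℝ) ^ Real.logb 2 (S + 1) :=
          (Real.rpow_logb h02 h2ne (by linarith)).symm
      _ ≤ (2:ℝ) ^ c := (Real.rpow_le_rpow_left_iff h12).mpr h1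
  refine ⟨c, hc0, ?_⟩
  intro m
  induction m using Nat.strong_induction_on with
  | _ m ih =>
  intro hm2
  have hmpos : (0:ℝ) < (m:ℝ) := by positivity
  have hL1 : (1:ℝ) ≤ Real.logb 2 (m:ℝ) := by
    have h := Real.logb_le_logb_of_le h12 h02 (by exact_mod_cast hm2 : (2:ℝ) ≤ (m:ℝ))
    simpa using h
  by_cases hMm : m ≤ M
  · -- base case
    have hTm : T m ≤ S :=
      Finset.single_le_sum (fun k _ => hT k) (Finset.mem_range.mpr (by omega))
    have h1 : T m ≤ (2:ℝ) ^ c := by linarith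
    refine h1.trans ((Real.rpow_le_rpow_left_iff h12).mpr ?_)
    have hLsq : (1:ℝ) ≤ Real.logb 2 (m:ℝ) ^ 2 := by nlinarith
    nlinarith [mul_le_mul_of_nonneg_left hLsq hc0.le]
  · -- inductive case
    push_neg at hMm
    set L : ℝ := Real.logb 2 (m:ℝ) with hLdef
    have hLpos : 0 < L := by linarith
    have h2L : (2:ℝ) ^ L = (m:ℝ) := Real.rpow_logb h02 h2ne hmpos
    have hXm : X ≤ (m:ℝ) := by
      have ha : (⌈X⌉₊ : ℝ) ≤ (M:ℝ) := Nat.cast_le.mpr (le_max_right _ _)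
      have hb : (M:ℝ) ≤ (m:ℝ) := Nat.cast_le.mpr hMm.le
      exact (Nat.le_ceil X).trans (ha.trans hb)
    have hA : 2 / (1 - r) ≤ (m:ℝ) := by rw [hXdef] at hXm; linarith
    have hB2 : 2 / r ≤ (m:ℝ) := by rw [hXdef] at hXm; linarith
    have hC : 2 * (1 + B) ≤ (m:ℝ) := by rw [hXdef] at hXm; linarith
    have hD : (2:ℝ) ^ δ ≤ (m:ℝ) := by rw [hXdef] at hXm; linarith
    have hE : (4:ℝ) < (m:ℝ) := by rw [hXdef] at hXm; linarith
    have hm4 : 4 < m := by exact_mod_cast hE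
    have hm5 : 5 ≤ m := by omega
    have hmr5 : (5:ℝ) ≤ (m:ℝ) := by exact_mod_cast hm5
    have hδL : δ ≤ L := by
      have h := Real.logb_le_logb_of_le h12 p4 hD
      rwa [Real.logb_rpow h02 h2ne] at h
    have hm₀m : m₀ < m := lt_of_le_of_lt (le_max_left _ _) hMm
    have hrm2 : (2:ℝ) ≤ r * (m:ℝ) := by
      rw [div_le_iff₀ hr0] at hB2; linarith
    -- the ceiling term
    set k₁ : ℕ := ⌈r * (m:ℝ)⌉₊ with hk₁def
    have hk₁lb : r * (m:ℝ) ≤ (k₁:ℝ) := Nat.le_ceil _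
    have hk₁ub : (k₁:ℝ) ≤ r' * (m:ℝ) := by
      have h1 : (k₁:ℝ) < r * (m:ℝ) + 1 := Nat.ceil_lt_add_one (by positivity)
      have h2 : 2 ≤ (1 - r) * (m:ℝ) := by
        rw [div_le_iff₀ (by linarith : (0:ℝ) < 1 - r)] at hA; linarith
      have h3 : r * (m:ℝ) + 1 ≤ r' * (m:ℝ) := by rw [hr'def]; nlinarith
      linarith
    have hk₁2 : 2 ≤ k₁ := by exact_mod_cast hrm2.trans hk₁lb
    have hk₁m : k₁ < m := by
      have hrm : r' * (m:ℝ) < 1 * (m:ℝ) := mul_lt_mul_of_pos_right hr'1 hmpos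
      have h : (k₁:ℝ) < (m:ℝ) := lt_of_le_of_lt hk₁ub (by linarith)
      exact_mod_cast h
    set Lk : ℝ := Real.logb 2 (k₁:ℝ) with hLkdef
    have hLk1 : (1:ℝ) ≤ Lk := by
      have h := Real.logb_le_logb_of_le h12 h02 (by exact_mod_cast hk₁2 : (2:ℝ) ≤ (k₁:ℝ))
      simpa [hLkdef] using h
    have hLkU : Lk ≤ L - δ := by
      have h1 : Lk ≤ Real.logb 2 (r' * (m:ℝ)) :=
        Real.logb_le_logb_of_le h12 (by positivity) hk₁ub
      have h2 : Real.logb 2 (r' * (m:ℝ)) = Real.logb 2 r' + L :=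
        Real.logb_mul hr'0.ne' hmpos.ne'
      have h3 : Real.logb 2 r' = -δ := by
        rw [hδdef, one_div, Real.logb_inv]; ring
      rw [h2, h3] at h1; linarith
    have hexp1 : c * Lk ^ 2 ≤ c * L ^ 2 - 3 * L := by
      have hsq : Lk * Lk ≤ (L - δ) * (L - δ) :=
        mul_self_le_mul_self (by linarith) hLkU
      nlinarith [mul_nonneg (mul_nonneg hc0.le hδpos.le) (by linarith : (0:ℝ) ≤ L - δ),
        mul_nonneg (by linarith : (0:ℝ) ≤ c * δ - 3) hLpos.le]
    set F : ℝ := (2:ℝ) ^ (c * L ^ 2) with hFdef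
    have hFpos : 0 < F := Real.rpow_pos_of_pos h02 _
    have h3L : (2:ℝ) ^ (3 * L) = (m:ℝ) ^ (3:ℕ) := by
      rw [show (3:ℝ) * L = L * ((3:ℕ):ℝ) by push_cast; ring,
        Real.rpow_mul h02.le, h2L, Real.rpow_natCast]
    have h6L : (2:ℝ) ^ (6 * L) = (m:ℝ) ^ (6:ℕ) := by
      rw [show (6:ℝ) * L = L * ((6:ℕ):ℝ) by push_cast; ring,
        Real.rpow_mul h02.le, h2L, Real.rpow_natCast]
    have hbound1 : T k₁ ≤ F / (m:ℝ) ^ 3 := by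
      have hih := ih k₁ hk₁m hk₁2
      have h1 : (2:ℝ) ^ (c * Lk ^ 2) ≤ (2:ℝ) ^ (c * L ^ 2 - 3 * L) :=
        (Real.rpow_le_rpow_left_iff h12).mpr hexp1
      have h2 : (2:ℝ) ^ (c * L ^ 2 - 3 * L) = F / (m:ℝ) ^ 3 := by
        rw [hFdef, Real.rpow_sub h02, h3L]
      calc T k₁ ≤ (2:ℝ) ^ (c * Lk ^ 2) := hih
        _ ≤ (2:ℝ) ^ (c * L ^ 2 - 3 * L) := h1
        _ = F / (m:ℝ) ^ 3 := h2
    have hbound3 : B * (m:ℝ) ^ 2 ≤ F / (m:ℝ) ^ 3 := by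
      have h1 : (m:ℝ) ^ (6:ℕ) ≤ F := by
        rw [← h6L, hFdef]
        exact (Real.rpow_le_rpow_left_iff h12).mpr (by nlinarith)
      have h2 : B * (m:ℝ) ^ 5 ≤ (m:ℝ) ^ (6:ℕ) := by
        have hBm : B ≤ (m:ℝ) := by linarith
        have := mul_le_mul_of_nonneg_left hBm (by positivity : (0:ℝ) ≤ (m:ℝ) ^ 5)
        calc B * (m:ℝ) ^ 5 = (m:ℝ) ^ 5 * B := by ring
          _ ≤ (m:ℝ) ^ 5 * (m:ℝ) := this
          _ = (m:ℝ) ^ (6:ℕ) := by ring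
      rw [le_div_iff₀ (by positivity : (0:ℝ) < (m:ℝ) ^ 3)]
      calc B * (m:ℝ) ^ 2 * (m:ℝ) ^ 3 = B * (m:ℝ) ^ 5 := by ring
        _ ≤ (m:ℝ) ^ (6:ℕ) := h2
        _ ≤ F := h1
    -- the (m-1) term
    have hm1lt : m - 1 < m := by omega
    have hm12 : 2 ≤ m - 1 := by omega
    have hcast : ((m - 1 : ℕ) : ℝ) = (m:ℝ) - 1 := by
      push_cast [Nat.cast_sub (by omega : 1 ≤ m)]; ring
    have hm1pos : (0:ℝ) < (m:ℝ) - 1 := by linarith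
    set L' : ℝ := Real.logb 2 ((m - 1 : ℕ) : ℝ) with hL'def
    have hm1ge2 : (2:ℝ) ≤ ((m - 1 : ℕ) : ℝ) := by rw [hcast]; linarith
    have hL'1 : (1:ℝ) ≤ L' := by
      have h := Real.logb_le_logb_of_le h12 h02 hm1ge2
      simpa [hL'def] using h
    have hL'L : L' ≤ L := by
      apply Real.logb_le_logb_of_le h12 (by linarith)
      rw [hcast]; linarith
    have hloggap : 1 / (m:ℝ) ≤ Real.log (m:ℝ) - Real.log ((m:ℝ) - 1) := by
      have h1 : Real.log (((m:ℝ) - 1) / (m:ℝ)) ≤ ((m:ℝ) - 1) / (m:ℝ) - 1 :=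
        Real.log_le_sub_one_of_pos (by positivity)
      rw [Real.log_div hm1pos.ne' hmpos.ne'] at h1
      have h2 : ((m:ℝ) - 1) / (m:ℝ) - 1 = -(1 / (m:ℝ)) := by field_simp; ring
      rw [h2] at h1; linarith
    have hlog2pos : 0 < Real.log 2 := Real.log_pos h12
    have hgapL : 1 / ((m:ℝ) * Real.log 2) ≤ L - L' := by
      rw [hLdef, hL'def, hcast, Real.logb, Real.logb, div_sub_div_same,
        div_le_div_iff₀ (by positivity) hlog2pos]
      have h := mul_le_mul_of_nonneg_right hloggap
        (by positivity : (0:ℝ) ≤ (m:ℝ) * Real.log 2)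
      have h2 : 1 / (m:ℝ) * ((m:ℝ) * Real.log 2) = Real.log 2 := by
        field_simp
      rw [h2] at h; linarith
    set t : ℝ := c * L with htdef
    have ht6 : (6:ℝ) ≤ t := by
      have h := mul_le_mul hc6 hL1 zero_le_one hc0.le
      rw [htdef]; linarith
    have hgap2 : t / (m:ℝ) ≤ (c * L ^ 2 - c * L' ^ 2) * Real.log 2 := by
      have ha : (L - L') * L ≤ (L - L') * (L + L') :=
        mul_le_mul_of_nonneg_left (by linarith) (by linarith)
      have hbb : 1 / ((m:ℝ) * Real.log 2) * L ≤ (L - L') * L :=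
        mul_le_mul_of_nonneg_right hgapL hLpos.le
      have hcc : c * (1 / ((m:ℝ) * Real.log 2) * L) * Real.log 2 = t / (m:ℝ) := by
        rw [htdef]; field_simp
      have hdd : c * L ^ 2 - c * L' ^ 2 = c * ((L - L') * (L + L')) := by ring
      rw [hdd, ← hcc]
      apply mul_le_mul_of_nonneg_right _ hlog2pos.le
      apply mul_le_mul_of_nonneg_left _ hc0.le
      linarith
    set g : ℝ := c * L ^ 2 - c * L' ^ 2 with hgdef
    set x : ℝ := g * Real.log 2 with hxdef
    have hxlb : t / (m:ℝ) ≤ x := hgap2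
    have hxpos : 0 < x := lt_of_lt_of_le (by positivity) hxlb
    have h2g : (2:ℝ) ^ g = Real.exp x := by
      rw [Real.rpow_def_of_pos h02, hxdef]
      exact congrArg Real.exp (mul_comm _ _)
    have hfm1 : (2:ℝ) ^ (c * L' ^ 2) = F * Real.exp (-x) := by
      rw [show c * L' ^ 2 = c * L ^ 2 - g by rw [hgdef]; ring,
        Real.rpow_sub h02, h2g, Real.exp_neg, div_eq_mul_inv, hFdef]
    have hexpub : Real.exp (-x) ≤ 1 / (1 + x) := by
      rw [Real.exp_neg]
      have h1 : 1 + x ≤ Real.exp x := by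
        have := Real.add_one_le_exp x; linarith
      rw [inv_eq_one_div]
      apply one_div_le_one_div_of_le (by linarith) h1
    have hdiv1 : 1 / (1 + x) ≤ 1 / (1 + t / (m:ℝ)) := by
      apply one_div_le_one_div_of_le (by positivity) (by linarith)
    have hdiv2 : 1 / (1 + t / (m:ℝ)) ≤ 1 - 2 / (m:ℝ) ^ 3 := by
      have hpoly : 2 * (m:ℝ) + 2 * t ≤ t * (m:ℝ) ^ 3 := aux_poly ht6 hmr5
      have he : (1 - 2 / (m:ℝ) ^ 3) * (1 + t / (m:ℝ)) - 1 =
          (t * (m:ℝ) ^ 3 - 2 * (m:ℝ) - 2 * t) / (m:ℝ) ^ 4 := by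
        field_simp; ring
      have hnn : 0 ≤ (t * (m:ℝ) ^ 3 - 2 * (m:ℝ) - 2 * t) / (m:ℝ) ^ 4 :=
        div_nonneg (by linarith) (by positivity)
      rw [div_le_iff₀ (by positivity : (0:ℝ) < 1 + t / (m:ℝ))]
      linarith
    have hbound2 : T (m - 1) ≤ F * (1 - 2 / (m:ℝ) ^ 3) := by
      calc T (m - 1) ≤ (2:ℝ) ^ (c * L' ^ 2) := ih (m - 1) hm1lt hm12
        _ = F * Real.exp (-x) := hfm1
        _ ≤ F * (1 - 2 / (m:ℝ) ^ 3) := by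
            apply mul_le_mul_of_nonneg_left _ hFpos.le
            linarith
    have hfin := hrec m hm₀m
    calc T m ≤ T k₁ + T (m - 1) + B * (m:ℝ) ^ 2 := hfin
      _ ≤ F / (m:ℝ) ^ 3 + F * (1 - 2 / (m:ℝ) ^ 3) + F / (m:ℝ) ^ 3 := by
          linarith
      _ = F := by field_simp; ring
end

section
/- For every real constant c ≥ 1 and every integer m ≥ 16, 2^{c (log₂(m−1))²} − 2^{c (log₂ m)²} ≤ −((log₂ m)/(24 m)) · 2^{c (log₂ m)²}. -/
/-!
STATEMENT 7: For every real constant c ≥ 1 and every integer m ≥ 16,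
2^{c (log₂(m−1))²} − 2^{c (log₂ m)²} ≤ −((log₂ m)/(24 m)) · 2^{c (log₂ m)²}.
-/

theorem rpow_logb_sq_diff_le (c : ℝ) (hc : 1 ≤ c) (m : ℕ) (hm : 16 ≤ m) :
    (2 : ℝ) ^ (c * (Real.logb 2 ((m : ℝ) - 1)) ^ 2) -
        (2 : ℝ) ^ (c * (Real.logb 2 m) ^ 2) ≤
      -((Real.logb 2 m) / (24 * m)) * (2 : ℝ) ^ (c * (Real.logb 2 m) ^ 2) := by
  have hM : (16:ℝ) ≤ (m:ℝ) := by exact_mod_cast hm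
  set M : ℝ := (m:ℝ) with hMdef
  have hM0 : (0:ℝ) < M := by linarith
  have hM1 : (0:ℝ) < M - 1 := by linarith
  set L := Real.logb 2 M with hLdef
  set L' := Real.logb 2 (M - 1) with hL'def
  clear_value M L L'
  have hlog2 : 0 < Real.log 2 := Real.log_pos (by norm_num)
  have hlog2' : Real.log 2 < 1 := by
    have := Real.log_two_lt_d9; linarith
  have hL'0 : 0 ≤ L' := hL'def ▸ Real.logb_nonneg (by norm_num) (by linarith)
  have hL0 : 0 ≤ L := hLdef ▸ Real.logb_nonneg (by norm_num) (by linarith)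
  -- L ≤ 12 M
  have hlogM : Real.log M ≤ M - 1 := Real.log_le_sub_one_of_pos hM0
  have hLM : L ≤ 12 * M := by
    rw [hLdef, Real.logb, div_le_iff₀ hlog2]
    nlinarith [Real.log_two_gt_d9]
  -- log M - log (M-1) ≥ 1/M
  have h1 : Real.log ((M-1)/M) ≤ (M-1)/M - 1 := Real.log_le_sub_one_of_pos (by positivity)
  have h2 : Real.log ((M-1)/M) = Real.log (M-1) - Real.log M :=
    Real.log_div (by linarith) (by linarith)
  have h3 : (M-1)/M - 1 = -(1/M) := by field_simp; ring
  have h4 : 1/M ≤ Real.log M - Real.log (M-1) := by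
    rw [h2, h3] at h1; linarith
  have hdiff : 1/(M * Real.log 2) ≤ L - L' := by
    rw [hLdef, hL'def, Real.logb, Real.logb, div_sub_div_same]
    have heq : 1/(M * Real.log 2) = (1/M)/Real.log 2 := by ring
    rw [heq]
    gcongr
  have hLL' : L' ≤ L := by
    have : 0 < 1/(M * Real.log 2) := by positivity
    linarith
  -- key : L/M ≤ (L² - L'²) * log 2
  have h5 : (L+L') * (1/(M*Real.log 2)) ≤ (L+L')*(L-L') :=
    mul_le_mul_of_nonneg_left hdiff (by linarith)
  have h6 : (L+L') * (1/(M*Real.log 2)) * Real.log 2 = (L+L')/M := by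
    field_simp
  have h7 := mul_le_mul_of_nonneg_right h5 hlog2.le
  rw [h6] at h7
  have h8 : L/M ≤ (L+L')/M := by gcongr; linarith
  have key : L/M ≤ (L^2 - L'^2) * Real.log 2 := by
    have hr : (L+L')*(L-L')*Real.log 2 = (L^2 - L'^2)*Real.log 2 := by ring
    linarith [hr ▸ h7]
  have hs : 0 ≤ L^2 - L'^2 := by nlinarith
  have hb0 : 0 ≤ (L^2 - L'^2) * Real.log 2 := by positivity
  have hposd : 0 < 1 + (L^2 - L'^2) * Real.log 2 := by linarith
  -- exponential bound
  have hexp : (2:ℝ)^(c*L'^2 - c*L^2) ≤ 1/(1+(L^2-L'^2)*Real.log 2) := by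
    have h9 : (2:ℝ)^(c*L'^2 - c*L^2) ≤ (2:ℝ)^(-(L^2-L'^2)) := by
      apply Real.rpow_le_rpow_of_exponent_le (by norm_num)
      nlinarith
    have h10 : 1 + (L^2-L'^2)*Real.log 2 ≤ (2:ℝ)^(L^2-L'^2) := by
      rw [Real.rpow_def_of_pos (by norm_num : (0:ℝ) < 2)]
      have := Real.add_one_le_exp ((L^2-L'^2)*Real.log 2)
      calc 1 + (L^2-L'^2)*Real.log 2 ≤ Real.exp ((L^2-L'^2)*Real.log 2) := by linarith
        _ = Real.exp (Real.log 2 * (L^2-L'^2)) := by ring_nf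
    have h11 : (2:ℝ)^(-(L^2-L'^2)) = 1/((2:ℝ)^(L^2-L'^2)) := by
      rw [Real.rpow_neg (by norm_num : (0:ℝ) ≤ 2), one_div]
    calc (2:ℝ)^(c*L'^2 - c*L^2) ≤ (2:ℝ)^(-(L^2-L'^2)) := h9
      _ = 1/((2:ℝ)^(L^2-L'^2)) := h11
      _ ≤ 1/(1+(L^2-L'^2)*Real.log 2) := by
          apply one_div_le_one_div_of_le hposd h10
  -- 1/(1+b) ≤ 1 - a
  have ha0 : 0 ≤ L/(24*M) := by positivity
  have ha : L/(24*M) ≤ 1/2 := by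
    rw [div_le_iff₀ (by positivity)]; linarith
  have h24 : L/M = 24*(L/(24*M)) := by field_simp
  have hfin : 1/(1+(L^2-L'^2)*Real.log 2) ≤ 1 - L/(24*M) := by
    rw [div_le_iff₀ hposd]
    have hba : 24*(L/(24*M)) ≤ (L^2-L'^2)*Real.log 2 := by rw [← h24]; exact key
    have hprod : (L/(24*M))*((L^2-L'^2)*Real.log 2) ≤ (1/2)*((L^2-L'^2)*Real.log 2) :=
      mul_le_mul_of_nonneg_right ha hb0
    have hexpand : (1 - L/(24*M))*(1+(L^2-L'^2)*Real.log 2) =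
        1 + (L^2-L'^2)*Real.log 2 - L/(24*M)
          - (L/(24*M))*((L^2-L'^2)*Real.log 2) := by ring
    rw [hexpand]
    linarith [hprod, hba]
  -- conclude
  have hP : 0 < (2:ℝ)^(c*L^2) := Real.rpow_pos_of_pos (by norm_num) _
  have hsplit : (2:ℝ)^(c*L'^2) = (2:ℝ)^(c*L'^2 - c*L^2) * (2:ℝ)^(c*L^2) := by
    rw [← Real.rpow_add (by norm_num : (0:ℝ) < 2)]; ring_nf
  have hchain := mul_le_mul_of_nonneg_right (hexp.trans hfin) hP.le
  rw [← hsplit] at hchain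
  have hring : (1 - L/(24*M)) * ((2:ℝ)^(c*L^2)) =
      (2:ℝ)^(c*L^2) + -(L/(24*M)) * ((2:ℝ)^(c*L^2)) := by ring
  linarith [hring ▸ hchain]
end
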